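/- arXiv:1002.4678 — 4 statements merged into one kernel-verified Lean document; each statement's English description precedes it below -/
import Mathlib

section
/- In the affine Weyl group Ã_n (n ≥ 2) with standard cyclic Coxeter presentation, for every j with 1 ≤ j ≤ n−1 the identity s_{0,j} s_n s₀ s_n = s₁ s_{0,j} s_n s₀ holds, where s_{0,j} = s₀ s₁ ⋯ s_j (ascending product). -/
/-- Descending product `s_{i,j} = sᵢ s_{i-1} ⋯ s_j` (for `i ≥ j`). -/
def descProd {G : Type*} [Group G] (s : ℕ → G) (i j : ℕ) : G :=
  (((List.range' j (i + 1 - j)).reverse).map s).prod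

/-- Ascending product `s_{i,j} = sᵢ s_{i+1} ⋯ s_j` (for `i ≤ j`). -/
def ascProd {G : Type*} [Group G] (s : ℕ → G) (i j : ℕ) : G :=
  ((List.range' i (j + 1 - i)).map s).prod

lemma ascProd_split {G : Type*} [Group G] (s : ℕ → G) (j : ℕ) (hj : 1 ≤ j) :
    ascProd s 0 j = s 0 * s 1 * ascProd s 2 j := by
  unfold ascProd
  have h1 : j + 1 - 0 = 2 + (j + 1 - 2) := by omega
  rw [h1, show 2 + (j + 1 - 2) = (j + 1 - 2) + 1 + 1 from by omega,
    List.range'_succ, List.range'_succ]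
  simp [mul_assoc]

/-- In Ã_n (n ≥ 2), for all :
`s_{0,j} s_n s₀ s_n = s₁ s_{0,j} s_n s₀` where `s_{0,j} = s₀ s₁ ⋯ s_j`. -/
theorem stmt11 {G : Type*} [Group G] (n : ℕ) (hn : 2 ≤ n) (s : ℕ → G)
    (hinv : ∀ i ≤ n, s i * s i = 1)
    (hbraid : ∀ i < n, s i * s (i + 1) * s i = s (i + 1) * s i * s (i + 1))
    (hbraid0 : s 0 * s n * s 0 = s n * s 0 * s n)
    (hcomm : ∀ i j : ℕ, i + 1 < j → j ≤ n → ¬(i = 0 ∧ j = n) →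
      s i * s j = s j * s i)
    (j : ℕ) (hj : 1 ≤ j) (hjn : j ≤ n - 1) :
    ascProd s 0 j * s n * s 0 * s n = s 1 * (ascProd s 0 j * s n * s 0) := by
  have hB : Commute (s 0) (ascProd s 2 j) := by
    apply Commute.list_prod_right
    intro x hx
    simp only [List.mem_map] at hx
    obtain ⟨i, hi, rfl⟩ := hx
    rw [List.mem_range'] at hi
    exact hcomm 0 i (by omega) (by omega) (by omega)
  have h1 : s 0 * s 1 * s 0 = s 1 * (s 0 * s 1) := by
    have := hbraid 0 (by omega); simpa [mul_assoc] using this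
  have h0 : s n * (s 0 * s n) = s 0 * (s n * s 0) := by
    simpa [mul_assoc] using hbraid0.symm
  set B := ascProd s 2 j with hBdef
  rw [ascProd_split s j hj]
  calc s 0 * s 1 * B * s n * s 0 * s n
      = s 0 * s 1 * (B * (s n * (s 0 * s n))) := by simp [mul_assoc]
    _ = s 0 * s 1 * (B * (s 0 * (s n * s 0))) := by rw [h0]
    _ = s 0 * s 1 * (s 0 * (B * (s n * s 0))) := by
        congr 1
        rw [← mul_assoc, ← hB.eq, mul_assoc]
    _ = (s 0 * s 1 * s 0) * (B * (s n * s 0)) := by simp only [mul_assoc]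
    _ = s 1 * (s 0 * s 1 * B * s n * s 0) := by rw [h1]; simp [mul_assoc]
end

section
/- Let f = f₁ − f₂, g = g₁ − g₂, h = h₁ − h₂ be binomials in a free associative algebra over a field, with f₁ = a₁v₁, g₁ = v₁b₁ (overlap v₁), and g₁ = a₂v₂, h₁ = v₂b₂ (overlap v₂). Define the compositions ⟨f;g⟩ = a₁g₂ − f₂b₁ and ⟨g;h⟩ = a₂h₂ − g₂b₂. If ⟨f;g⟩ = 0 (as element modulo the relations, i.e., trivially) and a₂ = v₁ā₂, then ⟨f; a₂h₂ − g₂b₂⟩ = (a₁g₂ − f₂b₁)b₂ + f₂ā₂(h₁ − h₂); in particular it lies in the two-sided ideal generated by ⟨f;g⟩ and h. -/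
/-- The element of the free associative algebra `k⟨S⟩` corresponding to a word in `S*`. -/
noncomputable def wordToAlg (k : Type*) [Field k] {S : Type*} (w : FreeMonoid S) :
    FreeAlgebra k S :=
  (w.toList.map (FreeAlgebra.ι k)).prod

lemma wordToAlg_mul (k : Type*) [Field k] {S : Type*} (x y : FreeMonoid S) :
    wordToAlg k (x * y) = wordToAlg k x * wordToAlg k y := by
  simp [wordToAlg, FreeMonoid.toList_mul]

/-- Bokut-style triviality lemma for compositions of binomials.  Let `f = f₁ − f₂`,
`g = g₁ − g₂`, `h = h₁ − h₂` be binomials of words, with overlaps `f₁ = a₁v₁`, `g₁ = v₁b₁`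
and `g₁ = a₂v₂`, `h₁ = v₂b₂`, and compositions `⟨f;g⟩ = a₁g₂ − f₂b₁`,
`⟨g;h⟩ = a₂h₂ − g₂b₂`.  If `⟨f;g⟩ = 0` and `a₂ = v₁abar₂`, then
`⟨f; a₂h₂ − g₂b₂⟩ = (f₁ − f₂)abar₂h₂ − a₁(a₂h₂ − g₂b₂) = (a₁g₂ − f₂b₁)b₂ + f₂abar₂(h₁ − h₂)`;
in particular it lies in the two-sided ideal generated by `⟨f;g⟩` and `h`. -/
theorem stmt16 (k : Type*) [Field k] (S : Type*)
    (f₁ f₂ g₁ g₂ h₁ h₂ a₁ a₂ abar₂ b₁ b₂ v₁ v₂ : FreeMonoid S)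
    (hf : f₁ = a₁ * v₁) (hg : g₁ = v₁ * b₁)
    (hg' : g₁ = a₂ * v₂) (hh : h₁ = v₂ * b₂)
    (ha : a₂ = v₁ * abar₂)
    (htriv : wordToAlg k a₁ * wordToAlg k g₂ - wordToAlg k f₂ * wordToAlg k b₁ = 0) :
    (wordToAlg k f₁ - wordToAlg k f₂) * wordToAlg k abar₂ * wordToAlg k h₂ -
        wordToAlg k a₁ *
          (wordToAlg k a₂ * wordToAlg k h₂ - wordToAlg k g₂ * wordToAlg k b₂) =
      (wordToAlg k a₁ * wordToAlg k g₂ - wordToAlg k f₂ * wordToAlg k b₁) * wordToAlg k b₂ +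
        wordToAlg k f₂ * wordToAlg k abar₂ * (wordToAlg k h₁ - wordToAlg k h₂) ∧
    (wordToAlg k f₁ - wordToAlg k f₂) * wordToAlg k abar₂ * wordToAlg k h₂ -
        wordToAlg k a₁ *
          (wordToAlg k a₂ * wordToAlg k h₂ - wordToAlg k g₂ * wordToAlg k b₂) ∈
      TwoSidedIdeal.span
        ({wordToAlg k a₁ * wordToAlg k g₂ - wordToAlg k f₂ * wordToAlg k b₁,
          wordToAlg k h₁ - wordToAlg k h₂} : Set (FreeAlgebra k S)) := by
  have hb : b₁ = abar₂ * v₂ := by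
    have : v₁ * b₁ = v₁ * (abar₂ * v₂) := by rw [← mul_assoc, ← ha, ← hg', hg]
    exact mul_left_cancel this
  have heq : (wordToAlg k f₁ - wordToAlg k f₂) * wordToAlg k abar₂ * wordToAlg k h₂ -
        wordToAlg k a₁ *
          (wordToAlg k a₂ * wordToAlg k h₂ - wordToAlg k g₂ * wordToAlg k b₂) =
      (wordToAlg k a₁ * wordToAlg k g₂ - wordToAlg k f₂ * wordToAlg k b₁) * wordToAlg k b₂ +
        wordToAlg k f₂ * wordToAlg k abar₂ * (wordToAlg k h₁ - wordToAlg k h₂) := by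
    subst hf hh ha hb
    simp only [wordToAlg_mul]
    noncomm_ring
  refine ⟨heq, ?_⟩
  rw [heq, htriv, zero_mul, zero_add]
  exact TwoSidedIdeal.mul_mem_left _ _ _
    (TwoSidedIdeal.subset_span (by simp))
end

section
/- In the affine Weyl group Ã_n (n ≥ 2) with standard cyclic Coxeter presentation, for all j with 1 ≤ j ≤ n−3 and all k with j+2 ≤ k ≤ n−1, the identity s_{0,j} s_n s_k s₀ s_{n,k} = s₁ s_{0,j} s_n s₀ s_{n−1,k} s_{k+1} holds, where s_{0,j} = s₀ s₁ ⋯ s_j, s_{n,k} = s_n s_{n−1} ⋯ s_k, and s_{n−1,k} = s_{n−1} s_{n−2} ⋯ s_k. -/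
section Aux

variable {G : Type*} [Group G] (s : ℕ → G)

lemma my_descProd_top (i j : ℕ) (h : j ≤ i) :
    descProd s (i + 1) j = s (i + 1) * descProd s i j := by
  unfold descProd
  have h1 : i + 1 + 1 - j = (i + 1 - j) + 1 := by omega
  have h2 : j + 1 * (i + 1 - j) = i + 1 := by omega
  rw [h1, List.range'_concat, h2, List.reverse_append, List.reverse_singleton,
    List.singleton_append, List.map_cons, List.prod_cons]

lemma my_descProd_self (i : ℕ) : descProd s i i = s i := by
  have : i + 1 - i = 1 := by omega
  simp [descProd, this]

lemma my_ascProd_head (i j : ℕ) (h : i ≤ j) :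
    ascProd s i j = s i * ascProd s (i + 1) j := by
  unfold ascProd
  have h1 : j + 1 - i = (j + 1 - (i + 1)) + 1 := by omega
  rw [h1, List.range'_succ, List.map_cons, List.prod_cons]

lemma my_commute_ascProd (g : G) (i j : ℕ) (h : ∀ x, i ≤ x → x ≤ j → Commute g (s x)) :
    Commute g (ascProd s i j) := by
  unfold ascProd
  apply Commute.list_prod_right
  intro x hx
  rw [List.mem_map] at hx
  obtain ⟨a, ha, rfl⟩ := hx
  rw [List.mem_range'] at ha
  obtain ⟨t, ht, rfl⟩ := ha
  exact h _ (by omega) (by omega)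

lemma my_swap {a b : G} (h : a * b = b * a) (x : G) : a * (b * x) = b * (a * x) := by
  rw [← mul_assoc, h, mul_assoc]

lemma my_braid_swap {a b : G} (h : a * b * a = b * a * b) (x : G) :
    a * (b * (a * x)) = b * (a * (b * x)) := by
  rw [← mul_assoc, ← mul_assoc, h, mul_assoc, mul_assoc]

lemma my_shift (n k : ℕ)
    (hb : s k * s (k + 1) * s k = s (k + 1) * s k * s (k + 1))
    (hc : ∀ i, k + 2 ≤ i → i ≤ n → s k * s i = s i * s k) :
    ∀ t, k + 1 + t ≤ n →
      s k * descProd s (k + 1 + t) k = descProd s (k + 1 + t) k * s (k + 1) := by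
  intro t
  induction t with
  | zero =>
    intro _
    rw [my_descProd_top s k k le_rfl, my_descProd_self, ← mul_assoc]
    exact hb
  | succ t ih =>
    intro h
    have e : k + 1 + (t + 1) = (k + 1 + t) + 1 := by omega
    rw [e, my_descProd_top s (k + 1 + t) k (by omega)]
    rw [← mul_assoc, hc (k + 1 + t + 1) (by omega) (by omega), mul_assoc,
      ih (by omega), ← mul_assoc]

end Aux

/-- In Ã_n (n ≥ 2), for  and :
`s_{0,j} s_n s_k s₀ s_{n,k} = s₁ s_{0,j} s_n s₀ s_{n−1,k} s_{k+1}`. -/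
theorem stmt17 {G : Type*} [Group G] (n : ℕ) (hn : 2 ≤ n) (s : ℕ → G)
    (hinv : ∀ i ≤ n, s i * s i = 1)
    (hbraid : ∀ i < n, s i * s (i + 1) * s i = s (i + 1) * s i * s (i + 1))
    (hbraid0 : s 0 * s n * s 0 = s n * s 0 * s n)
    (hcomm : ∀ i j : ℕ, i + 1 < j → j ≤ n → ¬(i = 0 ∧ j = n) →
      s i * s j = s j * s i)
    (j k : ℕ) (hj : 1 ≤ j) (hjn : j ≤ n - 3) (hk : j + 2 ≤ k) (hkn : k ≤ n - 1) :
    ascProd s 0 j * s n * s k * s 0 * descProd s n k =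
      s 1 * ascProd s 0 j * s n * s 0 * descProd s (n - 1) k * s (k + 1) := by
  have hn4 : 4 ≤ n := by omega
  have hjn' : j + 3 ≤ n := by omega
  have hkn' : k + 1 ≤ n := by omega
  set C := ascProd s 2 j with hC
  set D := descProd s (n - 1) k with hD
  -- expansions
  have hA : ascProd s 0 j = s 0 * (s 1 * C) := by
    rw [my_ascProd_head s 0 j (by omega), my_ascProd_head s 1 j (by omega)]
  have hDn : descProd s n k = s n * D := by
    have e : n = (n - 1) + 1 := by omega
    rw [hD, e, my_descProd_top s (n - 1) k (by omega)]
    simp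
  -- commutation facts
  have hk0 : s k * s 0 = s 0 * s k :=
    (hcomm 0 k (by omega) (by omega) (by omega)).symm
  have hCn : C * s n = s n * C := by
    refine (my_commute_ascProd s (s n) 2 j fun x hx hxj => ?_).symm.eq
    exact (hcomm x n (by omega) le_rfl (by omega)).symm
  have hC0 : C * s 0 = s 0 * C := by
    refine (my_commute_ascProd s (s 0) 2 j fun x hx hxj => ?_).symm.eq
    exact hcomm 0 x (by omega) (by omega) (by omega)
  -- the shift identity
  have hshift : s k * (s n * D) = s n * (D * s (k + 1)) := by
    have h1 : s k * descProd s n k = descProd s n k * s (k + 1) := by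
      have e : n = k + 1 + (n - (k + 1)) := by omega
      rw [e]
      exact my_shift s n k (hbraid k (by omega))
        (fun i hi hin => hcomm k i (by omega) hin (by omega))
        (n - (k + 1)) (by omega)
    rw [hDn] at h1
    rw [h1, mul_assoc]
  -- braid helpers
  have hb0 : ∀ x : G, s n * (s 0 * (s n * x)) = s 0 * (s n * (s 0 * x)) :=
    my_braid_swap hbraid0.symm
  have hb1 : ∀ x : G, s 0 * (s 1 * (s 0 * x)) = s 1 * (s 0 * (s 1 * x)) :=
    my_braid_swap (hbraid 0 (by omega))
  rw [hA, hDn]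
  simp only [mul_assoc]
  rw [my_swap hk0, hshift, my_swap hCn, my_swap hCn, my_swap hC0,
    my_swap hC0, my_swap hCn, hb0, hb1]
end

section
/- In the affine Weyl group Ã₄ (generators s₀,...,s₄ with standard cyclic presentation), for every natural number p the element (s₀s₁s₂s₃s₄)^p has length 5p in the Coxeter length function; equivalently, the word (s₀s₁s₂s₃s₄)^p is a reduced expression. -/
/-!
`Ã₄` acts on `ℤ` by affine permutations: `s a` exchanges `t` and `t + 1` whenever `t ≡ a`
(mod 5). These permutations commute with translation by `5`, so the Coxeter relations need only
be checked on `0, …, 4`. Every generator moves each integer by at most one, so an element of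
length `ℓ` moves `0` by at most `ℓ`. The Coxeter element `s₀s₁s₂s₃s₄` sends `0` to `-5` and
commutes with translation by `5`, so its `p`-th power sends `0` to `-5p`, forcing length at
least `5p`.
-/

/-- The Coxeter matrix of the affine Weyl group Ã_n: generators indexed by `Fin (n+1)`
arranged on a cycle, entries 1 on the diagonal, 3 for cyclically adjacent pairs, 2 otherwise. -/
def AtildeMatrix (n : ℕ) : CoxeterMatrix (Fin (n + 1)) where
  M := Matrix.of fun i j =>
    if i = j then 1
    else if (i.val + 1) % (n + 1) = j.val ∨ (j.val + 1) % (n + 1) = i.val then 3 else 2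
  isSymm := by
    ext i j
    simp only [Matrix.transpose_apply, Matrix.of_apply]
    by_cases h : i = j
    · simp [h]
    · have h2 : ¬j = i := fun h2 => h h2.symm
      simp [h, h2, or_comm]
  diagonal := fun i => by simp
  off_diagonal := fun i j h => by
    simp only [Matrix.of_apply, if_neg h]
    split <;> omega

namespace CoxeterSystem

variable {B W : Type*} [Group W] {M : CoxeterMatrix B} (cs : CoxeterSystem M W)

theorem length_pow_le (w : W) (p : ℕ) : cs.length (w ^ p) ≤ p * cs.length w := by
  induction p with
  | zero => simp
  | succ p ih =>
    calc cs.length (w ^ (p + 1)) ≤ cs.length (w ^ p) + cs.length w := by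
          rw [pow_succ]; exact cs.length_mul_le _ _
      _ ≤ (p + 1) * cs.length w := by rw [add_mul, one_mul]; gcongr

variable {X : Type*} [PseudoMetricSpace X] {φ : W →* Equiv.Perm X}

theorem dist_wordProd_apply_le (hφ : ∀ i x, dist (φ (cs.simple i) x) x ≤ 1) (ω : List B)
    (x : X) : dist (φ (cs.wordProd ω) x) x ≤ ω.length := by
  induction ω with
  | nil => simp
  | cons i ω ih =>
    rw [wordProd_cons, map_mul, Equiv.Perm.mul_apply, List.length_cons, Nat.cast_succ, add_comm]
    exact (dist_triangle _ _ _).trans (add_le_add (hφ i _) ih)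

theorem dist_apply_le_length (hφ : ∀ i x, dist (φ (cs.simple i) x) x ≤ 1) (w : W) (x : X) :
    dist (φ w x) x ≤ cs.length w := by
  obtain ⟨ω, hω, rfl⟩ := cs.exists_isReduced w
  rw [hω.eq]
  exact cs.dist_wordProd_apply_le hφ ω x

end CoxeterSystem

namespace Equiv.Perm

variable {f g : Equiv.Perm ℤ} {d : ℤ}

theorem apply_add_mul_of_mem_centralizer (hf : f ∈ Subgroup.centralizer {Equiv.addRight d})
    (t k : ℤ) : f (t + k * d) = f t + k * d := by
  have step (u : ℤ) : f (u + d) = f u + d :=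
    DFunLike.congr_fun (Subgroup.mem_centralizer_singleton_iff.mp hf) u
  induction k using Int.induction_on with
  | zero => simp
  | succ k ih => rw [add_one_mul, ← add_assoc, step, ih, add_assoc]
  | pred k ih =>
    have := step (t + (-k - 1) * d)
    rw [add_assoc, ← add_one_mul, sub_add_cancel, ih] at this
    linarith

theorem pow_apply_of_mem_centralizer (hf : f ∈ Subgroup.centralizer {Equiv.addRight d}) {x k : ℤ}
    (hx : f x = x + k * d) (p : ℕ) : (f ^ p) x = x + p * k * d := by
  induction p with
  | zero => simp
  | succ p ih =>
    rw [pow_succ, mul_apply, hx,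
      apply_add_mul_of_mem_centralizer (Subgroup.pow_mem _ hf p), ih]
    push_cast
    ring

theorem eq_of_mem_centralizer_addRight {m : ℕ} [NeZero m]
    (hf : f ∈ Subgroup.centralizer {Equiv.addRight (m : ℤ)})
    (hg : g ∈ Subgroup.centralizer {Equiv.addRight (m : ℤ)})
    (h : ∀ r : Fin m, f (r : ℕ) = g (r : ℕ)) : f = g := by
  have hm : (0 : ℤ) < m := by exact_mod_cast Nat.pos_of_neZero m
  ext t
  obtain ⟨r, hr⟩ : ∃ r : Fin m, ((r : ℕ) : ℤ) = t % m :=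
    ⟨⟨(t % m).toNat, by have := Int.emod_lt_of_pos t hm; omega⟩,
      by simp [Int.emod_nonneg t hm.ne']⟩
  have ht : t = (r : ℕ) + (t / m) * m := by rw [hr]; linarith [Int.ediv_mul_add_emod t m]
  rw [ht, apply_add_mul_of_mem_centralizer hf, apply_add_mul_of_mem_centralizer hg, h r]

end Equiv.Perm

/-- For `m ≠ 1` the involution exchanging `t` and `t + 1` whenever `t ≡ a` (mod `m`); for `m = 1`
the two residues coincide and this is the shift `t ↦ t + 1`. -/
def affineSwap {m : ℕ} (a : ZMod m) : Equiv.Perm ℤ where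
  toFun t := if (t : ZMod m) = a then t + 1 else if (t : ZMod m) = a + 1 then t - 1 else t
  invFun t := if (t : ZMod m) = a + 1 then t - 1 else if (t : ZMod m) = a then t + 1 else t
  left_inv t := by dsimp only; split_ifs <;> grind
  right_inv t := by dsimp only; split_ifs <;> grind

theorem dist_affineSwap_apply_le {m : ℕ} (a : ZMod m) (t : ℤ) : dist (affineSwap a t) t ≤ 1 := by
  rw [Int.dist_eq]
  simp only [affineSwap, Equiv.coe_fn_mk]
  split_ifs <;> norm_num

theorem affineSwap_mem_centralizer {m : ℕ} (a : ZMod m) :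
    affineSwap a ∈ Subgroup.centralizer {Equiv.addRight (m : ℤ)} := by
  rw [Subgroup.mem_centralizer_singleton_iff]
  ext t
  simp only [affineSwap, Equiv.Perm.mul_apply, Equiv.coe_addRight, Equiv.coe_fn_mk,
    Int.cast_add, Int.cast_natCast, ZMod.natCast_self, add_zero]
  split_ifs <;> ring

namespace AtildeMatrix

theorem isLiftable_four : (AtildeMatrix 4).IsLiftable fun i => affineSwap ((i : ℕ) : ZMod 5) := by
  have hmem (i : Fin 5) := affineSwap_mem_centralizer ((i : ℕ) : ZMod 5)
  have window : ∀ i j r : Fin 5,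
      ((affineSwap ((i : ℕ) : ZMod 5) * affineSwap ((j : ℕ) : ZMod 5)) ^ AtildeMatrix 4 i j)
        ((r : ℕ) : ℤ) = (r : ℕ) := by
    decide
  intro i j
  exact Equiv.Perm.eq_of_mem_centralizer_addRight
    (Subgroup.pow_mem _ (Subgroup.mul_mem _ (hmem i) (hmem j)) _) (Subgroup.one_mem _) (window i j)

noncomputable def affinePermFour : (AtildeMatrix 4).Group →* Equiv.Perm ℤ :=
  (AtildeMatrix 4).toCoxeterSystem.lift ⟨_, isLiftable_four⟩

theorem affinePermFour_simple (i : Fin 5) :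
    affinePermFour ((AtildeMatrix 4).simple i) = affineSwap ((i : ℕ) : ZMod 5) :=
  (AtildeMatrix 4).toCoxeterSystem.lift_apply_simple isLiftable_four i

def coxeterElementFour : (AtildeMatrix 4).Group :=
  (AtildeMatrix 4).simple 0 * (AtildeMatrix 4).simple 1 * (AtildeMatrix 4).simple 2 *
    (AtildeMatrix 4).simple 3 * (AtildeMatrix 4).simple 4

theorem length_coxeterElementFour_pow_le (p : ℕ) :
    (AtildeMatrix 4).toCoxeterSystem.length (coxeterElementFour ^ p) ≤ 5 * p := by
  set cs := (AtildeMatrix 4).toCoxeterSystem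
  have hc : coxeterElementFour = cs.wordProd [0, 1, 2, 3, 4] := by
    simp [coxeterElementFour, cs, CoxeterSystem.wordProd, mul_assoc]
  calc cs.length (coxeterElementFour ^ p) ≤ p * cs.length coxeterElementFour := cs.length_pow_le _ p
    _ ≤ p * 5 := by gcongr; rw [hc]; exact cs.length_wordProd_le _
    _ = 5 * p := mul_comm _ _

theorem affinePermFour_coxeterElementFour_pow_apply_zero (p : ℕ) :
    affinePermFour (coxeterElementFour ^ p) 0 = -(5 * p) := by
  have hc : affinePermFour coxeterElementFour = affineSwap (0 : ZMod 5) * affineSwap (1 : ZMod 5) *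
      affineSwap (2 : ZMod 5) * affineSwap (3 : ZMod 5) * affineSwap (4 : ZMod 5) := by
    simp only [coxeterElementFour, map_mul, affinePermFour_simple]; rfl
  have hmem : affinePermFour coxeterElementFour ∈
      Subgroup.centralizer {Equiv.addRight ((5 : ℕ) : ℤ)} := by
    rw [hc]
    repeat apply Subgroup.mul_mem
    all_goals exact affineSwap_mem_centralizer _
  have hzero : affinePermFour coxeterElementFour 0 = 0 + (-1) * ((5 : ℕ) : ℤ) := by
    rw [hc]; decide
  rw [map_pow, Equiv.Perm.pow_apply_of_mem_centralizer hmem hzero]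
  push_cast
  ring

theorem le_length_coxeterElementFour_pow (p : ℕ) :
    5 * p ≤ (AtildeMatrix 4).toCoxeterSystem.length (coxeterElementFour ^ p) := by
  have key := (AtildeMatrix 4).toCoxeterSystem.dist_apply_le_length (φ := affinePermFour)
    (fun i t => by
      rw [CoxeterMatrix.toCoxeterSystem_simple, affinePermFour_simple]
      exact dist_affineSwap_apply_le _ _)
    (coxeterElementFour ^ p) 0
  rw [affinePermFour_coxeterElementFour_pow_apply_zero, Int.dist_eq] at key
  refine (Nat.cast_le (α := ℝ)).mp ?_
  push_cast
  simpa [mul_comm] using key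

end AtildeMatrix

/-- In the affine Weyl group Ã₄, for every `p : ℕ` the element `(s₀s₁s₂s₃s₄)^p` has
Coxeter length `5p`; i.e. the word `(s₀s₁s₂s₃s₄)^p` is reduced. -/
theorem stmt18 (p : ℕ) :
    (AtildeMatrix 4).toCoxeterSystem.length
      (((AtildeMatrix 4).simple 0 * (AtildeMatrix 4).simple 1 * (AtildeMatrix 4).simple 2 *
          (AtildeMatrix 4).simple 3 * (AtildeMatrix 4).simple 4) ^ p) = 5 * p :=
  le_antisymm (AtildeMatrix.length_coxeterElementFour_pow_le p)
    (AtildeMatrix.le_length_coxeterElementFour_pow p)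
end
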